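/- arXiv:2511.04113 — 4 statements merged into one kernel-verified Lean document; each statement's English description precedes it below -/
import Mathlib

section
/- Let q be a prime power and let ℓ be an integer with 1 ≤ ℓ < q. Let n ≥ 2, 1 ≤ d ≤ n−1, and let g_1, …, g_{n−d} ∈ 𝔽_q[t_1, …, t_d] be polynomials of degree at most ℓ. Let ρ ∈ (𝔽_q \ {0})^{n−d}, let a ∈ 𝔽_q^n, and let C = { a + (t, ρ_1 g_1(t), …, ρ_{n−d} g_{n−d}(t)) : t ∈ 𝔽_q^d }. Let k, D, M be natural numbers such that ℓ(D − ω) < (M − ω)q for all integers 0 ≤ ω < k. Suppose f ∈ 𝔽_q[x_1, …, x_n] has degree at most D and vanishes on C with multiplicity M. Then for every β ∈ ℤ_{≥0}^n with |β| < k, the polynomial f_{β,ρ}(s) := f^{(β)}(a + (s, ρ_1 g_1(s), …, ρ_{n−d} g_{n−d}(s))) ∈ 𝔽_q[s_1, …, s_d] is the zero polynomial. -/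
/-!
Write `ω = |β|`. The derivative `f^{(β)}` has degree at most `D - ω`, and since
`(f^{(β)})^{(γ)}` is an integer multiple of `f^{(β + γ)}` it vanishes to order `M - ω` at every
point of `C`. Multiplicity cannot drop under polynomial substitution: on Taylor expansions,
`h(p + X) ∈ (X)^M` implies `h(p + ψ) ∈ (X)^M` as soon as every `ψ_j ∈ (X)`. Hence `f_{β,ρ}`
vanishes to order `M - ω` at every point of `𝔽_q^d`, while its degree is at most
`ℓ(D - ω) < (M - ω)q`, so the multiplicity Schwartz–Zippel lemma forces `f_{β,ρ} = 0`. That lemma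
goes by induction on the number of variables, using that a nonzero univariate polynomial with a
root of multiplicity `k` at every point of `𝔽_q` has degree at least `kq`.
-/

/-- The `β`-th Hasse derivative of a multivariate polynomial `f`: the coefficient of
`y^β` in `f(x + y)`, as a polynomial in `x`. -/
noncomputable def hasseDeriv {m : ℕ} {F : Type*} [CommRing F]
    (β : Fin m →₀ ℕ) (f : MvPolynomial (Fin m) F) : MvPolynomial (Fin m) F :=
  MvPolynomial.coeff β
    (MvPolynomial.eval₂ (MvPolynomial.C.comp MvPolynomial.C)
      (fun i => MvPolynomial.C (MvPolynomial.X i) + MvPolynomial.X i) f)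

/-- The multiplicity of `f` at the point `a`: the supremum of all `M ∈ ℤ_{≥0}` such that
`f^{(β)}(a) = 0` for all `β` with `|β| < M`. -/
noncomputable def polyMult {m : ℕ} {F : Type*} [CommRing F]
    (f : MvPolynomial (Fin m) F) (a : Fin m → F) : ℕ∞ :=
  ⨆ M ∈ {M : ℕ | ∀ β : Fin m →₀ ℕ, (∑ i, β i) < M →
    MvPolynomial.eval a (hasseDeriv β f) = 0}, (M : ℕ∞)

/-- The point `a + (t, ρ_1 g_1(t), …, ρ_{n-d} g_{n-d}(t)) ∈ F^n`. -/
noncomputable def curvePt {F : Type*} [Field F] {n d : ℕ} (a : Fin n → F) (ρ : Fin (n - d) → F)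
    (g : Fin (n - d) → MvPolynomial (Fin d) F) (t : Fin d → F) : Fin n → F :=
  fun j => a j + if hj : (j : ℕ) < d then t ⟨j, hj⟩
    else ρ ⟨(j : ℕ) - d, by have := j.isLt; omega⟩ *
      MvPolynomial.eval t (g ⟨(j : ℕ) - d, by have := j.isLt; omega⟩)

/-- The tuple of polynomials `s ↦ a + (s, ρ_1 g_1(s), …, ρ_{n-d} g_{n-d}(s))`,
coordinatewise as elements of `F[s_1,…,s_d]`. -/
noncomputable def curvePoly {F : Type*} [Field F] {n d : ℕ} (a : Fin n → F)
    (ρ : Fin (n - d) → F) (g : Fin (n - d) → MvPolynomial (Fin d) F) :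
    Fin n → MvPolynomial (Fin d) F :=
  fun j => MvPolynomial.C (a j) + if hj : (j : ℕ) < d then MvPolynomial.X ⟨j, hj⟩
    else MvPolynomial.C (ρ ⟨(j : ℕ) - d, by have := j.isLt; omega⟩) *
      g ⟨(j : ℕ) - d, by have := j.isLt; omega⟩

open MvPolynomial

theorem Finsupp.prod_choose_eq_zero_of_not_le {σ : Type*} [Fintype σ] {α β : σ →₀ ℕ}
    (h : ¬β ≤ α) : ∏ i, (α i).choose (β i) = 0 := by
  obtain ⟨i, hi⟩ := not_forall.mp (mt Finsupp.le_def.mpr h)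
  exact Finset.prod_eq_zero (Finset.mem_univ i) (Nat.choose_eq_zero_of_lt (not_le.mp hi))

namespace MvPolynomial

variable {R σ : Type*} [CommSemiring R]

theorem C_add_X_pow_eq_sum (r : R) (i : σ) (e : ℕ) :
    (C r + X i : MvPolynomial σ R) ^ e =
      ∑ k ∈ Finset.range (e + 1), monomial (Finsupp.single i k) (e.choose k * r ^ (e - k)) := by
  rw [add_comm, add_pow]
  refine Finset.sum_congr rfl fun k _ => ?_
  rw [X_pow_eq_monomial, ← map_pow, ← map_natCast C, mul_assoc, ← map_mul, mul_comm,
    C_mul_monomial, mul_one, mul_comm]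

theorem coeff_prod_C_add_X_pow [Fintype σ] (r : σ → R) (α β : σ →₀ ℕ) :
    coeff β (∏ i, (C (r i) + X i) ^ α i) = ∏ i, (α i).choose (β i) * r i ^ (α i - β i) := by
  classical
  simp only [C_add_X_pow_eq_sum, Finset.prod_univ_sum, ← monomial_sum_prod, coeff_sum,
    coeff_monomial]
  have hiff : ∀ x : σ → ℕ, ∑ i, Finsupp.single i (x i) = β ↔ ⇑β = x := fun x => by
    rw [← Finsupp.equivFunOnFinite_symm_eq_sum, Equiv.symm_apply_eq]; exact eq_comm
  simp only [hiff, Finset.sum_ite_eq, Fintype.mem_piFinset, Finset.mem_range, Nat.lt_succ_iff]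
  split_ifs with hle
  · rfl
  · rw [Finset.prod_mul_distrib, ← Nat.cast_prod,
      Finsupp.prod_choose_eq_zero_of_not_le (fun h => hle (Finsupp.le_def.mp h)), Nat.cast_zero,
      zero_mul]

theorem mem_idealOfVars_iff (f : MvPolynomial σ R) :
    f ∈ idealOfVars σ R ↔ constantCoeff f = 0 := by
  rw [← pow_one (idealOfVars σ R), mem_pow_idealOfVars_iff']
  simp [Finsupp.degree_eq_zero_iff, constantCoeff_eq]

theorem aeval_mem_pow_idealOfVars {τ : Type*} {ψ : σ → MvPolynomial τ R}
    (hψ : ∀ i, ψ i ∈ idealOfVars τ R) {M : ℕ} {f : MvPolynomial σ R}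
    (hf : f ∈ idealOfVars σ R ^ M) : aeval ψ f ∈ idealOfVars τ R ^ M := by
  have hmap : (idealOfVars σ R).map (aeval ψ) ≤ idealOfVars τ R := by
    rw [Ideal.map_span, Ideal.span_le, ← Set.range_comp]
    exact Set.range_subset_iff.mpr fun i => by simpa using hψ i
  have := Ideal.mem_map_of_mem (aeval ψ) hf
  rw [Ideal.map_pow] at this
  exact Ideal.pow_right_mono hmap M this

theorem totalDegree_aeval_le {τ : Type*} {φ : σ → MvPolynomial τ R} {L : ℕ}
    (hφ : ∀ i, (φ i).totalDegree ≤ L) (f : MvPolynomial σ R) :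
    (aeval φ f).totalDegree ≤ f.totalDegree * L := by
  rw [aeval_def, eval₂_eq]
  refine (totalDegree_finsetSum _ _).trans (Finset.sup_le fun d hd => ?_)
  refine (totalDegree_mul _ _).trans ?_
  rw [algebraMap_eq, totalDegree_C, zero_add]
  calc (∏ i ∈ d.support, φ i ^ d i).totalDegree
      ≤ ∑ i ∈ d.support, (φ i ^ d i).totalDegree := totalDegree_finsetProd _ _
    _ ≤ ∑ i ∈ d.support, d i * L := Finset.sum_le_sum fun i _ =>
        (totalDegree_pow _ _).trans (Nat.mul_le_mul_left _ (hφ i))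
    _ = (d.sum fun _ e => e) * L := by rw [Finsupp.sum, Finset.sum_mul]
    _ ≤ f.totalDegree * L := Nat.mul_le_mul_right _ (le_totalDegree hd)

end MvPolynomial

theorem Polynomial.mul_card_le_natDegree_of_le_rootMultiplicity {F : Type*} [Field F] [Fintype F]
    {p : Polynomial F} {k : ℕ} (h : ∀ b, k ≤ p.rootMultiplicity b) :
    k * Fintype.card F ≤ p.natDegree := by
  classical
  calc k * Fintype.card F = ∑ _b : F, k := by simp [mul_comm]
    _ ≤ ∑ b : F, p.roots.count b := Finset.sum_le_sum fun b _ => by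
        rw [Polynomial.count_roots]; exact h b
    _ = p.roots.card := Multiset.sum_count_eq_card fun b _ => Finset.mem_univ b
    _ ≤ p.natDegree := p.card_roots'

section HasseDeriv

variable {R : Type*} [CommRing R] {m : ℕ}

theorem hasseDeriv_monomial (β α : Fin m →₀ ℕ) (c : R) :
    hasseDeriv β (monomial α c) = (∏ i, (α i).choose (β i)) • monomial (α - β) c := by
  rw [hasseDeriv, eval₂_monomial, RingHom.comp_apply, Finsupp.prod_fintype _ _ (by simp),
    coeff_C_mul, coeff_prod_C_add_X_pow, Finset.prod_mul_distrib, ← Nat.cast_prod,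
    nsmul_eq_mul, monomial_eq, Finsupp.prod_fintype _ _ (by simp)]
  simp only [Finsupp.tsub_apply]
  ring

theorem coeff_hasseDeriv (β δ : Fin m →₀ ℕ) (f : MvPolynomial (Fin m) R) :
    coeff δ (hasseDeriv β f) = (∏ i, ((δ + β) i).choose (β i)) • coeff (δ + β) f := by
  classical
  induction f using MvPolynomial.induction_on' with
  | add p q hp hq => simp_all [hasseDeriv, smul_add]
  | monomial α c =>
    rw [hasseDeriv_monomial, coeff_smul, coeff_monomial, coeff_monomial]
    by_cases hα : α = δ + β
    · simp [hα]
    by_cases hβα : β ≤ α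
    · rw [if_neg hα, if_neg (fun h => hα ((tsub_eq_iff_eq_add_of_le hβα).mp h)), smul_zero,
        smul_zero]
    · rw [if_neg hα, Finsupp.prod_choose_eq_zero_of_not_le hβα, zero_smul, smul_zero]

theorem hasseDeriv_zero' (f : MvPolynomial (Fin m) R) : hasseDeriv 0 f = f := by
  ext δ
  simp [coeff_hasseDeriv]

theorem hasseDeriv_hasseDeriv (β γ : Fin m →₀ ℕ) (f : MvPolynomial (Fin m) R) :
    hasseDeriv γ (hasseDeriv β f) = (∏ i, ((β + γ) i).choose (β i)) • hasseDeriv (β + γ) f := by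
  ext δ
  simp only [coeff_hasseDeriv, coeff_smul, smul_smul, ← Finset.prod_mul_distrib,
    add_right_comm δ γ β, add_assoc δ β γ]
  congr 1
  refine Finset.prod_congr rfl fun i _ => ?_
  simp only [Finsupp.add_apply]
  have h := Nat.choose_mul (n := δ i + (β i + γ i)) (le_add_right le_rfl : β i ≤ β i + γ i)
  rw [show δ i + (β i + γ i) - β i = δ i + γ i by omega, Nat.add_sub_cancel_left] at h
  linarith

theorem totalDegree_hasseDeriv_add_le (β : Fin m →₀ ℕ) {f : MvPolynomial (Fin m) R}
    (h : hasseDeriv β f ≠ 0) : (hasseDeriv β f).totalDegree + ∑ i, β i ≤ f.totalDegree := by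
  obtain ⟨δ, hδ, hdeg⟩ := Finset.exists_mem_eq_sup _ (support_nonempty.mpr h)
    fun s => s.sum fun _ e => e
  have hcoeff : coeff (δ + β) f ≠ 0 := fun h0 =>
    mem_support_iff.mp hδ (by rw [coeff_hasseDeriv, h0, smul_zero])
  have hsum (s : Fin m →₀ ℕ) : (s.sum fun _ e => e) = ∑ i, s i :=
    Finsupp.sum_fintype _ _ fun _ => rfl
  have hle := le_totalDegree (mem_support_iff.mpr hcoeff)
  rw [hsum] at hle
  rwa [totalDegree, hdeg, hsum, ← Finset.sum_add_distrib]

end HasseDeriv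

section MvTaylor

variable {R σ : Type*} [CommSemiring R]

noncomputable def mvTaylor (a : σ → R) : MvPolynomial σ R →ₐ[R] MvPolynomial σ R :=
  aeval fun i => C (a i) + X i

theorem constantCoeff_mvTaylor (a : σ → R) (f : MvPolynomial σ R) :
    constantCoeff (mvTaylor a f) = eval a f := by
  change ((constantCoeff : MvPolynomial σ R →+* R).comp (mvTaylor a).toRingHom) f = eval a f
  congr 1
  ext <;> simp [mvTaylor]

theorem aeval_mvTaylor {τ : Type*} (a : σ → R) (ψ : σ → MvPolynomial τ R)
    (f : MvPolynomial σ R) : aeval ψ (mvTaylor a f) = aeval (fun i => C (a i) + ψ i) f := by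
  rw [mvTaylor, ← AlgHom.comp_apply, comp_aeval]
  simp

theorem mvTaylor_aeval {τ : Type*} (a : τ → R) (φ : σ → MvPolynomial τ R)
    (f : MvPolynomial σ R) : mvTaylor a (aeval φ f) = aeval (fun i => mvTaylor a (φ i)) f := by
  rw [← AlgHom.comp_apply, comp_aeval]

end MvTaylor

section Multiplicity

variable {R : Type*} [CommRing R] {m : ℕ}

theorem coeff_mvTaylor (a : Fin m → R) (δ : Fin m →₀ ℕ) (f : MvPolynomial (Fin m) R) :
    coeff δ (mvTaylor a f) = eval a (hasseDeriv δ f) := by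
  have h : (mvTaylor a).toRingHom = (map (eval a)).comp
      (eval₂Hom (C.comp C) fun i => C (X i) + X i) := by
    ext <;> simp [mvTaylor]
  rw [hasseDeriv, ← coeff_map, ← coe_eval₂Hom, ← RingHom.comp_apply, ← h]
  rfl

theorem le_polyMult_iff {f : MvPolynomial (Fin m) R} {a : Fin m → R} {M : ℕ} :
    (M : ℕ∞) ≤ polyMult f a ↔
      ∀ β : Fin m →₀ ℕ, ∑ i, β i < M → eval a (hasseDeriv β f) = 0 := by
  refine ⟨fun h β hβ => ?_, fun h => le_iSup₂_of_le M h le_rfl⟩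
  obtain ⟨M', hlt⟩ := lt_iSup_iff.mp ((Nat.cast_lt.mpr hβ).trans_le h)
  obtain ⟨hM', hlt⟩ := lt_iSup_iff.mp hlt
  exact hM' β (by exact_mod_cast hlt)

theorem le_polyMult_iff_mvTaylor_mem {f : MvPolynomial (Fin m) R} {a : Fin m → R} {M : ℕ} :
    (M : ℕ∞) ≤ polyMult f a ↔ mvTaylor a f ∈ idealOfVars (Fin m) R ^ M := by
  simp [le_polyMult_iff, mem_pow_idealOfVars_iff', Finsupp.degree_eq_sum, coeff_mvTaylor]

theorem le_polyMult_hasseDeriv {f : MvPolynomial (Fin m) R} {a : Fin m → R} {M : ℕ}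
    (h : (M : ℕ∞) ≤ polyMult f a) (β : Fin m →₀ ℕ) :
    ((M - ∑ i, β i : ℕ) : ℕ∞) ≤ polyMult (hasseDeriv β f) a := by
  rw [le_polyMult_iff] at h ⊢
  intro γ hγ
  have hβγ : ∑ i, (β + γ) i < M := by
    simp only [Finsupp.add_apply, Finset.sum_add_distrib]
    omega
  rw [hasseDeriv_hasseDeriv, map_nsmul, h _ hβγ, smul_zero]

theorem polyMult_le_polyMult_aeval {n : ℕ} (φ : Fin n → MvPolynomial (Fin m) R)
    (f : MvPolynomial (Fin n) R) (a : Fin m → R) :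
    polyMult f (fun j => eval a (φ j)) ≤ polyMult (aeval φ f) a := by
  refine ENat.forall_natCast_le_iff_le.mp fun M hM => ?_
  rw [le_polyMult_iff_mvTaylor_mem] at hM ⊢
  set ψ : Fin n → MvPolynomial (Fin m) R := fun j => mvTaylor a (φ j) - C (eval a (φ j))
  have hψ : ∀ j, ψ j ∈ idealOfVars (Fin m) R := fun j => by
    simp [ψ, mem_idealOfVars_iff, constantCoeff_mvTaylor]
  have hcomp : mvTaylor a (aeval φ f) = aeval ψ (mvTaylor (fun j => eval a (φ j)) f) := by
    rw [mvTaylor_aeval, aeval_mvTaylor]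
    simp [ψ]
  rw [hcomp]
  exact aeval_mem_pow_idealOfVars hψ hM

end Multiplicity

section SchwartzZippel

theorem finSuccEquiv_hasseDeriv_cons_zero_coeff {R : Type*} [CommRing R] {d : ℕ}
    (γ : Fin d →₀ ℕ) (f : MvPolynomial (Fin (d + 1)) R) (j : ℕ) :
    (finSuccEquiv R d (hasseDeriv (Finsupp.cons 0 γ) f)).coeff j =
      hasseDeriv γ ((finSuccEquiv R d f).coeff j) := by
  ext δ
  have hcons : Finsupp.cons j δ + Finsupp.cons 0 γ = Finsupp.cons j (δ + γ) := by
    ext i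
    cases i using Fin.cases <;> simp
  rw [finSuccEquiv_coeff_coeff, coeff_hasseDeriv, coeff_hasseDeriv, finSuccEquiv_coeff_coeff,
    hcons, Fin.prod_univ_succ]
  simp

theorem taylor_map_eval_finSuccEquiv {R : Type*} [CommRing R] {d : ℕ} (b : R) (x : Fin d → R)
    (f : MvPolynomial (Fin (d + 1)) R) :
    Polynomial.taylor b ((finSuccEquiv R d f).map (eval x)) =
      (finSuccEquiv R d (mvTaylor (Fin.cons b x) f)).map (eval 0) := by
  have h : ((Polynomial.taylorAlgHom b).toRingHom.comp (Polynomial.mapRingHom (eval x))).comp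
      (finSuccEquiv R d).toRingHom = ((Polynomial.mapRingHom (eval 0)).comp
        (finSuccEquiv R d).toRingHom).comp (mvTaylor (Fin.cons b x)).toRingHom := by
    refine MvPolynomial.ringHom_ext (fun r => ?_) (fun i => ?_)
    · simp [finSuccEquiv_apply]
    · cases i using Fin.cases <;> simp [mvTaylor, finSuccEquiv_apply, add_comm]
  simpa using RingHom.congr_fun h f

theorem le_rootMultiplicity_of_le_polyMult {R : Type*} [CommRing R] {d k : ℕ} {b : R}
    {x : Fin d → R} {f : MvPolynomial (Fin (d + 1)) R}
    (hf : (k : ℕ∞) ≤ polyMult f (Fin.cons b x)) (h0 : (finSuccEquiv R d f).map (eval x) ≠ 0) :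
    k ≤ ((finSuccEquiv R d f).map (eval x)).rootMultiplicity b := by
  rw [Polynomial.rootMultiplicity_eq_natTrailingDegree, ← Polynomial.taylor_apply]
  refine Polynomial.le_natTrailingDegree (by rwa [Ne, Polynomial.taylor_eq_zero]) fun j hj => ?_
  rw [le_polyMult_iff_mvTaylor_mem, mem_pow_idealOfVars_iff'] at hf
  rw [taylor_map_eval_finSuccEquiv, Polynomial.coeff_map, eval_zero, constantCoeff_eq,
    finSuccEquiv_coeff_coeff]
  exact hf _ (by simpa [Finsupp.degree_eq_sum, Fin.sum_univ_succ] using hj)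

variable {F : Type*} [Field F] [Fintype F]

-- Otherwise some `f^{(0,γ)}`, restricted to a line in the direction of the first variable,
-- would be nonzero of degree at most `natDegree` with a root of multiplicity `> natDegree / q`
-- at every point.
theorem le_polyMult_leadingCoeff_finSuccEquiv {d mm : ℕ} {f : MvPolynomial (Fin (d + 1)) F}
    (hmult : ∀ x, (mm : ℕ∞) ≤ polyMult f x) (x : Fin d → F) :
    ((mm - (finSuccEquiv F d f).natDegree / Fintype.card F : ℕ) : ℕ∞) ≤
      polyMult (finSuccEquiv F d f).leadingCoeff x := by
  set P := finSuccEquiv F d f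
  refine le_polyMult_iff.mpr fun γ hγ => ?_
  by_contra hne
  set g := (finSuccEquiv F d (hasseDeriv (Finsupp.cons 0 γ) f)).map (eval x)
  have hcoeff (j : ℕ) : g.coeff j = eval x (hasseDeriv γ (P.coeff j)) := by
    simp [g, P, finSuccEquiv_hasseDeriv_cons_zero_coeff]
  have hg0 : g ≠ 0 := fun h => hne <| by
    rw [Polynomial.leadingCoeff, ← hcoeff, h, Polynomial.coeff_zero]
  have hgdeg : g.natDegree ≤ P.natDegree :=
    Polynomial.natDegree_le_iff_coeff_eq_zero.mpr fun j hj => by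
      simp [hcoeff, Polynomial.coeff_eq_zero_of_natDegree_lt hj, hasseDeriv]
  have hroot (b : F) : mm - ∑ i, γ i ≤ g.rootMultiplicity b := by
    refine le_rootMultiplicity_of_le_polyMult ?_ hg0
    simpa [Fin.sum_univ_succ] using
      le_polyMult_hasseDeriv (hmult (Fin.cons b x)) (Finsupp.cons 0 γ)
  have hle : (mm - ∑ i, γ i) * Fintype.card F ≤ P.natDegree :=
    (Polynomial.mul_card_le_natDegree_of_le_rootMultiplicity hroot).trans hgdeg
  have hlt : P.natDegree < (mm - ∑ i, γ i) * Fintype.card F :=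
    Nat.lt_mul_of_div_lt (by omega) Fintype.card_pos
  omega

theorem eq_zero_of_forall_le_polyMult_of_totalDegree_lt {d mm : ℕ} {f : MvPolynomial (Fin d) F}
    (hmult : ∀ x, (mm : ℕ∞) ≤ polyMult f x) (hdeg : f.totalDegree < mm * Fintype.card F) :
    f = 0 := by
  induction d generalizing mm with
  | zero =>
    have hmm : 0 < mm := Nat.pos_of_mul_pos_right (Nat.zero_lt_of_lt hdeg)
    have h := le_polyMult_iff.mp (hmult finZeroElim) 0 (by simpa using hmm)
    rw [hasseDeriv_zero', eq_C_of_isEmpty f, eval_C] at h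
    rw [eq_C_of_isEmpty f, h, map_zero]
  | succ d ih =>
    by_contra hf
    have hlead : (finSuccEquiv F d f).leadingCoeff ≠ 0 :=
      Polynomial.leadingCoeff_ne_zero.mpr ((finSuccEquiv F d).map_ne_zero_iff.mpr hf)
    refine hlead (ih (le_polyMult_leadingCoeff_finSuccEquiv hmult) ?_)
    set P := finSuccEquiv F d f
    have h₁ : P.leadingCoeff.totalDegree + P.natDegree ≤ f.totalDegree :=
      totalDegree_coeff_finSuccEquiv_add_le f _ hlead
    have h₂ := Nat.div_mul_le_self P.natDegree (Fintype.card F)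
    rw [Nat.sub_mul]
    omega

end SchwartzZippel

section Curve

variable {F : Type*} [Field F] {n d : ℕ} (a : Fin n → F) (ρ : Fin (n - d) → F)
  (g : Fin (n - d) → MvPolynomial (Fin d) F)

theorem eval_curvePoly (t : Fin d → F) :
    (fun j => eval t (curvePoly a ρ g j)) = curvePt a ρ g t := by
  funext j
  by_cases hj : (j : ℕ) < d <;> simp [curvePoly, curvePt, hj]

theorem totalDegree_curvePoly_le {ℓ : ℕ} (hℓ : 1 ≤ ℓ) (hg : ∀ i, (g i).totalDegree ≤ ℓ)
    (j : Fin n) : (curvePoly a ρ g j).totalDegree ≤ ℓ := by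
  refine (totalDegree_add _ _).trans (max_le (by simp) ?_)
  by_cases hj : (j : ℕ) < d
  · simpa [hj] using hℓ
  · simpa [hj] using (totalDegree_mul _ _).trans (by simpa using hg _)

end Curve

theorem hasseDeriv_comp_curve_eq_zero_general {F : Type*} [Field F] [Fintype F]
    (q n d ℓ k D M : ℕ) (hcard : Fintype.card F = q)
    (hl1 : 1 ≤ ℓ)
    (g : Fin (n - d) → MvPolynomial (Fin d) F) (hg : ∀ i, (g i).totalDegree ≤ ℓ)
    (ρ : Fin (n - d) → F) (a : Fin n → F)
    (hkDM : ∀ ω : ℕ, ω < k → (ℓ : ℤ) * ((D : ℤ) - (ω : ℤ)) < ((M : ℤ) - (ω : ℤ)) * q)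
    (f : MvPolynomial (Fin n) F) (hf : f.totalDegree ≤ D)
    (hvanish : ∀ t : Fin d → F, (M : ℕ∞) ≤ polyMult f (curvePt a ρ g t))
    (β : Fin n →₀ ℕ) (hβ : (∑ i, β i) < k) :
    MvPolynomial.aeval (curvePoly a ρ g) (hasseDeriv β f) = 0 := by
  subst hcard
  by_cases h0 : hasseDeriv β f = 0
  · rw [h0, map_zero]
  obtain ⟨ω, hω⟩ : ∃ ω, ∑ i, β i = ω := ⟨_, rfl⟩
  have hdeg : (hasseDeriv β f).totalDegree + ω ≤ D :=
    hω ▸ (totalDegree_hasseDeriv_add_le β h0).trans hf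
  have hineq := hkDM ω (hω ▸ hβ)
  have hωM : ω < M := by
    have hlhs : (0 : ℤ) ≤ ℓ * ((D : ℤ) - ω) := mul_nonneg (by positivity) (by omega)
    have hq : (0 : ℤ) < Fintype.card F := by exact_mod_cast Fintype.card_pos
    by_contra! hMω
    nlinarith
  refine eq_zero_of_forall_le_polyMult_of_totalDegree_lt (mm := M - ω) (fun t => ?_) ?_
  · have h := le_polyMult_hasseDeriv (hvanish t) β
    rw [hω, ← eval_curvePoly] at h
    exact h.trans (polyMult_le_polyMult_aeval _ _ t)
  · calc (aeval (curvePoly a ρ g) (hasseDeriv β f)).totalDegree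
        ≤ (hasseDeriv β f).totalDegree * ℓ :=
          totalDegree_aeval_le (totalDegree_curvePoly_le a ρ g hl1 hg) _
      _ ≤ (D - ω) * ℓ := Nat.mul_le_mul_right _ (by omega)
      _ < (M - ω) * Fintype.card F := by
          zify [hωM.le, le_add_self.trans hdeg]
          linarith

/-- If `1 ≤ ℓ < q`, the `g_i` have degree at most `ℓ`, `ℓ(D - ω) < (M - ω)q` for all
`0 ≤ ω < k`, and `f` has degree at most `D` and vanishes with multiplicity `M` on the
curve `C = { a + (t, ρ_1 g_1(t), …, ρ_{n-d} g_{n-d}(t)) : t ∈ 𝔽_q^d }`, then for every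
`β` with `|β| < k` the polynomial `f_{β,ρ}(s) = f^{(β)}(a + (s, ρ_1 g_1(s), …))` is the
zero polynomial. -/
theorem hasseDeriv_comp_curve_eq_zero {F : Type*} [Field F] [Fintype F]
    (q n d ℓ k D M : ℕ) (hq : IsPrimePow q) (hcard : Fintype.card F = q)
    (hl1 : 1 ≤ ℓ) (hlq : ℓ < q) (hn : 2 ≤ n) (hd1 : 1 ≤ d) (hdn : d ≤ n - 1)
    (g : Fin (n - d) → MvPolynomial (Fin d) F) (hg : ∀ i, (g i).totalDegree ≤ ℓ)
    (ρ : Fin (n - d) → F) (hρ : ∀ i, ρ i ≠ 0) (a : Fin n → F)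
    (hkDM : ∀ ω : ℕ, ω < k → (ℓ : ℤ) * ((D : ℤ) - (ω : ℤ)) < ((M : ℤ) - (ω : ℤ)) * q)
    (f : MvPolynomial (Fin n) F) (hf : f.totalDegree ≤ D)
    (hvanish : ∀ t : Fin d → F, (M : ℕ∞) ≤ polyMult f (curvePt a ρ g t))
    (β : Fin n →₀ ℕ) (hβ : (∑ i, β i) < k) :
    MvPolynomial.aeval (curvePoly a ρ g) (hasseDeriv β f) = 0 :=
  hasseDeriv_comp_curve_eq_zero_general q n d ℓ k D M hcard hl1 g hg ρ a hkDM f hf hvanish β hβ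
end

section
/- Let q be a prime power, let m, k ∈ ℕ, let c ∈ (𝔽_q \ {0})^m, and for each α ∈ ℤ_{≥0}^m with |α| < k(q−1) let b_α ∈ 𝔽_q. Suppose that for every β ∈ ℤ_{≥0}^m with |β| < k and every t ∈ (𝔽_q \ {0})^m, one has Σ_{|α| < k(q−1)} b_α · C(α, β) · c^{α−β} · t^{α−β} = 0, where terms with α_i < β_i for some i are taken to be zero. Then b_α = 0 for all α with |α| < k(q−1). -/
open Polynomial Finset

noncomputable def Vc (w g j : ℕ) : ℤ := ((((1 : Polynomial ℤ) + X)^w - 1)^g).coeff j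

lemma L3 (w d j : ℕ) : ((w*d).choose j : ℤ) = ∑ g ∈ Finset.range (d+1), (d.choose g : ℤ) * Vc w g j := by
  have h : ((1 : Polynomial ℤ) + X)^(w*d) = ∑ g ∈ Finset.range (d+1), (d.choose g : ℤ[X]) * (((1 : Polynomial ℤ) + X)^w - 1)^g := by
    rw [pow_mul]
    have : ((1 : Polynomial ℤ) + X)^w = (((1 : Polynomial ℤ) + X)^w - 1) + 1 := by ring
    rw [this, add_pow]
    refine Finset.sum_congr rfl fun g hg => by ring
  have := congrArg (fun p => Polynomial.coeff p j) h
  simpa [Polynomial.coeff_one_add_X_pow, Polynomial.finset_sum_coeff, Vc] using this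

lemma L4 (w : ℕ) {g j : ℕ} (h : j < g) : Vc w g j = 0 := by
  have hX : (X : ℤ[X]) ∣ (((1 : Polynomial ℤ) + X)^w - 1) := by
    rw [Polynomial.X_dvd_iff]
    simp [Polynomial.coeff_one_add_X_pow]
  have : (X : ℤ[X])^g ∣ (((1 : Polynomial ℤ) + X)^w - 1)^g := pow_dvd_pow_of_dvd hX g
  exact Polynomial.X_pow_dvd_iff.mp this j h

lemma L5 (w g : ℕ) : Vc w g g = (w : ℤ)^g := by
  have hX : (X : ℤ[X]) ∣ (((1 : Polynomial ℤ) + X)^w - 1) := by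
    rw [Polynomial.X_dvd_iff]
    simp [Polynomial.coeff_one_add_X_pow]
  obtain ⟨u, hu⟩ := hX
  have hu0 : u.coeff 0 = w := by
    have h1 := congrArg (fun p => Polynomial.coeff p 1) hu
    simp [Polynomial.coeff_one_add_X_pow, Polynomial.coeff_X_mul, Polynomial.coeff_one] at h1
    omega
  have : Vc w g g = (u^g).coeff 0 := by
    rw [Vc, hu, mul_pow]
    have := Polynomial.coeff_X_pow_mul (u^g) g 0
    simpa using this
  rw [this, ← hu0]
  have : (u ^ g).coeff 0 = (u.coeff 0)^g := by
    simpa using (Polynomial.constantCoeff : ℤ[X] →+* ℤ).map_pow u g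
  rw [this]

lemma sum_lt_sum_of_le_of_ne {m : ℕ} {f g : Fin m → ℕ} (hle : ∀ i, f i ≤ g i) (hne : f ≠ g) :
    (∑ i, f i) < ∑ i, g i := by
  obtain ⟨i, hi⟩ := Function.ne_iff.mp hne
  exact Finset.sum_lt_sum (fun i _ => hle i) ⟨i, Finset.mem_univ i, lt_of_le_of_ne (hle i) hi⟩

lemma aux {F : Type*} [Field F] {m w k : ℕ} (hw : (w : F) = -1)
    (r : Fin m → ℕ) (B : (Fin m → ℕ) → F)
    (hB : ∀ β : Fin m → ℕ, (∑ i, β i) < k →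
      ∑ δ ∈ (Fintype.piFinset fun _ : Fin m => Finset.range k).filter (fun δ => ∑ i, δ i < k),
        (∏ i, ((r i + w * δ i).choose (β i) : F)) * B δ = 0) :
    ∀ δ ∈ (Fintype.piFinset fun _ : Fin m => Finset.range k).filter
        (fun δ => ∑ i, δ i < k), B δ = 0 := by
  classical
  set D := (Fintype.piFinset fun _ : Fin m => Finset.range k).filter
      (fun δ => ∑ i, δ i < k) with hD
  have hmemD : ∀ δ ∈ D, ∀ i, δ i < k := by
    intro δ hδ i
    simp only [hD, Finset.mem_filter, Fintype.mem_piFinset, Finset.mem_range] at hδ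
    exact hδ.1 i
  have hsumD : ∀ δ ∈ D, (∑ i, δ i) < k := by
    intro δ hδ
    simp only [hD, Finset.mem_filter] at hδ
    exact hδ.2
  set T : (Fin m → ℕ) → F := fun β => ∑ δ ∈ D, (∏ i, ((w * δ i).choose (β i) : F)) * B δ with hTdef
  set A : (Fin m → ℕ) → F := fun γ => ∑ δ ∈ D, (∏ i, ((δ i).choose (γ i) : F)) * B δ with hAdef
  -- Vandermonde over F
  have vdm : ∀ (a b n : ℕ), ((a + b).choose n : F)
      = ∑ j ∈ Finset.range (n+1), (a.choose j : F) * (b.choose (n - j) : F) := by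
    intro a b n
    have h := Nat.add_choose_eq a b n
    rw [Finset.Nat.sum_antidiagonal_eq_sum_range_succ (fun i j => a.choose i * b.choose j)] at h
    exact_mod_cast congrArg (fun x : ℕ => (x : F)) h
  -- Step 1 : T β = 0 for |β| < k
  have step1 : ∀ n (β : Fin m → ℕ), (∑ i, β i) ≤ n → (∑ i, β i) < k → T β = 0 := by
    intro n
    induction n using Nat.strong_induction_on with
    | _ n IH =>
      intro β hβn hβk
      have key : (0 : F) = ∑ x ∈ Fintype.piFinset (fun i => Finset.range (β i + 1)),
          (∏ i, ((r i).choose (x i) : F)) * T (fun i => β i - x i) := by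
        have h0 := hB β hβk
        calc (0 : F) = ∑ δ ∈ D, (∏ i, ((r i + w * δ i).choose (β i) : F)) * B δ := h0.symm
          _ = ∑ δ ∈ D, (∑ x ∈ Fintype.piFinset (fun i => Finset.range (β i + 1)),
                (∏ i, ((r i).choose (x i) : F)) * (∏ i, ((w * δ i).choose (β i - x i) : F))) * B δ := by
              refine Finset.sum_congr rfl fun δ hδ => ?_
              congr 1
              rw [show (∏ i, ((r i + w * δ i).choose (β i) : F))
                  = ∏ i, ∑ j ∈ Finset.range (β i + 1),
                      ((r i).choose j : F) * ((w * δ i).choose (β i - j) : F) from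
                Finset.prod_congr rfl fun i _ => vdm (r i) (w * δ i) (β i)]
              rw [Finset.prod_univ_sum]
              exact Finset.sum_congr rfl fun x _ => by rw [Finset.prod_mul_distrib]
          _ = ∑ x ∈ Fintype.piFinset (fun i => Finset.range (β i + 1)),
                (∏ i, ((r i).choose (x i) : F)) * T (fun i => β i - x i) := by
              simp_rw [Finset.sum_mul]
              rw [Finset.sum_comm]
              refine Finset.sum_congr rfl fun x _ => ?_
              rw [hTdef]
              simp_rw [mul_assoc]
              rw [← Finset.mul_sum]
      -- extract the x = 0 term
      have h00 : (0 : Fin m → ℕ) ∈ Fintype.piFinset (fun i => Finset.range (β i + 1)) := by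
        simp
      rw [Finset.sum_eq_single_of_mem (0 : Fin m → ℕ) h00] at key
      · simp only [Pi.zero_apply, Nat.choose_zero_right, Nat.cast_one, Finset.prod_const_one,
          one_mul, Nat.sub_zero] at key
        exact key.symm
      · intro x hx hxne
        have hxle : ∀ i, x i ≤ β i := by
          intro i
          simp only [Fintype.mem_piFinset, Finset.mem_range] at hx
          exact Nat.lt_succ_iff.mp (hx i)
        have hlt : (∑ i, (β i - x i)) < ∑ i, β i := by
          refine sum_lt_sum_of_le_of_ne (fun i => Nat.sub_le _ _) ?_
          intro hcontra
          apply hxne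
          funext i
          have h1 := congrFun hcontra i
          have h2 := hxle i
          simp only [Pi.zero_apply]
          omega
        have : T (fun i => β i - x i) = 0 := by
          refine IH (∑ i, (β i - x i)) (lt_of_lt_of_le hlt hβn) _ le_rfl (lt_trans hlt hβk)
        rw [this, mul_zero]
  -- Step 2 : A γ = 0 for |γ| < k
  have step2 : ∀ n (γ : Fin m → ℕ), (∑ i, γ i) ≤ n → (∑ i, γ i) < k → A γ = 0 := by
    intro n
    induction n using Nat.strong_induction_on with
    | _ n IH =>
      intro γ hγn hγk
      have key : (0 : F) = ∑ x ∈ Fintype.piFinset (fun _ : Fin m => Finset.range k),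
          (∏ i, ((Vc w (x i) (γ i) : ℤ) : F)) * A x := by
        calc (0 : F) = T γ := (step1 (∑ i, γ i) γ le_rfl hγk).symm
          _ = ∑ δ ∈ D, (∑ x ∈ Fintype.piFinset (fun _ : Fin m => Finset.range k),
                (∏ i, ((δ i).choose (x i) : F)) * (∏ i, ((Vc w (x i) (γ i) : ℤ) : F))) * B δ := by
              refine Finset.sum_congr rfl fun δ hδ => ?_
              congr 1
              have hfac : ∀ i : Fin m, ((w * δ i).choose (γ i) : F)
                  = ∑ g ∈ Finset.range k, ((δ i).choose g : F) * ((Vc w g (γ i) : ℤ) : F) := by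
                intro i
                have hz := L3 w (δ i) (γ i)
                have hzF := congrArg (fun z : ℤ => (z : F)) hz
                push_cast at hzF
                rw [hzF]
                refine Finset.sum_subset ?_ ?_
                · exact Finset.range_subset_range.mpr (hmemD δ hδ i)
                · intro g hg hgn
                  simp only [Finset.mem_range] at hg hgn
                  rw [Nat.choose_eq_zero_of_lt (by omega)]
                  simp
              rw [Finset.prod_congr rfl fun i _ => hfac i, Finset.prod_univ_sum]
              exact Finset.sum_congr rfl fun x _ => by rw [Finset.prod_mul_distrib]
          _ = ∑ x ∈ Fintype.piFinset (fun _ : Fin m => Finset.range k),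
                (∏ i, ((Vc w (x i) (γ i) : ℤ) : F)) * A x := by
              simp_rw [Finset.sum_mul]
              rw [Finset.sum_comm]
              refine Finset.sum_congr rfl fun x _ => ?_
              rw [show A x = ∑ δ ∈ D, (∏ i, ((δ i).choose (x i) : F)) * B δ from rfl,
                Finset.mul_sum]
              refine Finset.sum_congr rfl fun δ _ => by ring
      have hγbox : γ ∈ Fintype.piFinset (fun _ : Fin m => Finset.range k) := by
        simp only [Fintype.mem_piFinset, Finset.mem_range]
        intro i
        exact lt_of_le_of_lt (Finset.single_le_sum (f := γ) (fun j _ => Nat.zero_le _)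
          (Finset.mem_univ i)) hγk
      rw [Finset.sum_eq_single_of_mem γ hγbox] at key
      · have hdiag : (∏ i, ((Vc w (γ i) (γ i) : ℤ) : F)) = (-1 : F) ^ (∑ i, γ i) := by
          rw [← Finset.prod_pow_eq_pow_sum]
          refine Finset.prod_congr rfl fun i _ => ?_
          rw [L5]
          push_cast
          rw [hw]
        rw [hdiag] at key
        have hne : ((-1 : F) ^ (∑ i, γ i)) ≠ 0 := pow_ne_zero _ (neg_ne_zero.mpr one_ne_zero)
        rcases mul_eq_zero.mp key.symm with h | h
        · exact absurd h hne
        · exact h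
      · intro x hx hxne
        by_cases hcase : ∀ i, x i ≤ γ i
        · have hlt : (∑ i, x i) < ∑ i, γ i := sum_lt_sum_of_le_of_ne hcase hxne
          rw [IH (∑ i, x i) (lt_of_lt_of_le hlt hγn) x le_rfl (lt_trans hlt hγk), mul_zero]
        · push_neg at hcase
          obtain ⟨i, hi⟩ := hcase
          have : (∏ i, ((Vc w (x i) (γ i) : ℤ) : F)) = 0 := by
            refine Finset.prod_eq_zero (Finset.mem_univ i) ?_
            rw [L4 w hi]
            simp
          rw [this, zero_mul]
  -- Step 3 : downward induction
  have step3 : ∀ n, ∀ δ ∈ D, k - (∑ i, δ i) ≤ n → B δ = 0 := by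
    intro n
    induction n with
    | zero =>
      intro δ hδ hn
      have := hsumD δ hδ
      omega
    | succ n IH =>
      intro δ hδ hn
      have key : A δ = B δ := by
        rw [show A δ = ∑ δ' ∈ D, (∏ i, ((δ' i).choose (δ i) : F)) * B δ' from rfl,
          Finset.sum_eq_single_of_mem δ hδ]
        · simp
        · intro δ' hδ' hne
          by_cases hcase : ∀ i, δ i ≤ δ' i
          · have hlt : (∑ i, δ i) < ∑ i, δ' i :=
              sum_lt_sum_of_le_of_ne hcase (fun h => hne h.symm)
            have hk' := hsumD δ' hδ'
            have : B δ' = 0 := IH δ' hδ' (by omega)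
            rw [this, mul_zero]
          · push_neg at hcase
            obtain ⟨i, hi⟩ := hcase
            have : (∏ i, ((δ' i).choose (δ i) : F)) = 0 := by
              refine Finset.prod_eq_zero (Finset.mem_univ i) ?_
              rw [Nat.choose_eq_zero_of_lt hi]
              simp
            rw [this, zero_mul]
      rw [← key]
      exact step2 (∑ i, δ i) δ le_rfl (hsumD δ hδ)
  intro δ hδ
  exact step3 k δ hδ (Nat.sub_le _ _)

lemma modsel {w : ℕ} (hw : 1 ≤ w) (a b t : ℕ) (hba : b ≤ a) :
    w ∣ (a - b + (b % w + (w - t % w))) ↔ a % w = t % w := by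
  have h1 : t % w < w := Nat.mod_lt _ hw
  have h2 : b % w ≤ b := Nat.mod_le b w
  have hcast : ((a - b + (b % w + (w - t % w)) : ℕ) : ℤ)
      = ((a : ℤ) - ((t % w : ℕ) : ℤ)) - ((b : ℤ) - ((b % w : ℕ) : ℤ)) + (w : ℤ) := by
    zify [hba, le_of_lt h1]
    ring
  rw [← Int.natCast_dvd_natCast, hcast]
  have e1 : (w : ℤ) ∣ ((b : ℤ) - ((b % w : ℕ) : ℤ)) := by
    have h := Nat.dvd_sub_mod (n := w) b
    zify [h2] at h
    exact h
  have hZ : (w : ℤ) ∣ ((w : ℤ) - ((b : ℤ) - ((b % w : ℕ) : ℤ))) := dvd_sub (dvd_refl _) e1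
  have hsplit : ((a : ℤ) - ((t % w : ℕ) : ℤ)) - ((b : ℤ) - ((b % w : ℕ) : ℤ)) + (w : ℤ)
      = ((a : ℤ) - ((t % w : ℕ) : ℤ)) + ((w : ℤ) - ((b : ℤ) - ((b % w : ℕ) : ℤ))) := by ring
  rw [hsplit]
  constructor
  · intro h
    have := (h.sub hZ)
    rw [add_sub_cancel_right] at this
    have h3 := (Nat.modEq_iff_dvd (n := w) (a := t % w) (b := a)).mpr this
    have h4 : (t % w) % w = t % w := Nat.mod_eq_of_lt h1
    rw [Nat.ModEq] at h3
    omega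
  · intro h
    have h4 : (t % w) % w = t % w := Nat.mod_eq_of_lt h1
    have h3 : (t % w) ≡ a [MOD w] := by rw [Nat.ModEq]; omega
    exact ((Nat.modEq_iff_dvd).mp h3).add hZ

open Finset


/-- If for every multi-index `β` with `|β| < k` and every `t ∈ (𝔽_q \ {0})^m` the sum
`Σ_{|α| < k(q-1)} b_α · C(α,β) · c^{α-β} · t^{α-β}` vanishes (terms with `α_i < β_i`
being zero since then `C(α_i, β_i) = 0`), then all `b_α` with `|α| < k(q-1)` vanish. -/
theorem coeffs_eq_zero_of_sums_eq_zero {F : Type*} [Field F] [Fintype F]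
    (q m k : ℕ) (hq : IsPrimePow q) (hcard : Fintype.card F = q)
    (c : Fin m → F) (hc : ∀ i, c i ≠ 0) (b : (Fin m → ℕ) → F)
    (hsum : ∀ β : Fin m → ℕ, (∑ i, β i) < k → ∀ t : Fin m → F, (∀ i, t i ≠ 0) →
      ∑ α ∈ (Fintype.piFinset fun _ : Fin m => Finset.range (k * (q - 1))) |>.filter
          (fun α => ∑ i, α i < k * (q - 1)),
        b α * ((∏ i, (α i).choose (β i) : ℕ) : F) *
          (∏ i, c i ^ (α i - β i)) * (∏ i, t i ^ (α i - β i)) = 0) :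
    ∀ α : Fin m → ℕ, (∑ i, α i) < k * (q - 1) → b α = 0 := by
  classical
  intro α₀ hα₀
  set w : ℕ := q - 1 with hwdef
  have hq2 : 2 ≤ q := hq.two_le
  have hw1 : 1 ≤ w := by omega
  have hqF : ((q : ℕ) : F) = 0 := by rw [← hcard]; exact FiniteField.cast_card_eq_zero F
  have hwF : (w : F) = -1 := by
    rw [hwdef, Nat.cast_sub (by omega : 1 ≤ q), hqF, Nat.cast_one, zero_sub]
  set SA := (Fintype.piFinset fun _ : Fin m => Finset.range (k * w)).filter
      (fun α => ∑ i, α i < k * w) with hSA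
  -- Step A : eliminate c by substituting t = s * c⁻¹
  have H1 : ∀ β : Fin m → ℕ, (∑ i, β i) < k → ∀ s : Fin m → Fˣ,
      (∑ α ∈ SA, b α * ((∏ i, (α i).choose (β i) : ℕ) : F)
        * (∏ i, ((s i : F)) ^ (α i - β i))) = 0 := by
    intro β hβ s
    have h := hsum β hβ (fun i => (s i : F) * (c i)⁻¹)
      (fun i => mul_ne_zero (Units.ne_zero _) (inv_ne_zero (hc i)))
    calc (∑ α ∈ SA, b α * ((∏ i, (α i).choose (β i) : ℕ) : F)
            * (∏ i, ((s i : F)) ^ (α i - β i)))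
        = ∑ α ∈ SA, b α * ((∏ i, (α i).choose (β i) : ℕ) : F)
            * (∏ i, c i ^ (α i - β i)) * (∏ i, ((s i : F) * (c i)⁻¹) ^ (α i - β i)) := by
          refine Finset.sum_congr rfl fun α _ => ?_
          have hprod : (∏ i, c i ^ (α i - β i)) * (∏ i, ((s i : F) * (c i)⁻¹) ^ (α i - β i))
              = ∏ i, ((s i : F)) ^ (α i - β i) := by
            rw [← Finset.prod_mul_distrib]
            refine Finset.prod_congr rfl fun i _ => ?_
            rw [← mul_pow, mul_comm ((s i : F)) ((c i)⁻¹), ← mul_assoc, mul_inv_cancel₀ (hc i), one_mul]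
          conv_rhs => rw [mul_assoc, hprod]
      _ = 0 := h
  -- Step B : orthogonality over the unit group
  have hpow : ∀ n : ℕ, (∑ x : Fˣ, ((x : F)) ^ n) = if w ∣ n then (-1 : F) else 0 := by
    intro n
    have h := FiniteField.sum_pow_units F n
    rw [hcard] at h
    simpa [Units.val_pow_eq_pow_val] using h
  have orth : ∀ β : Fin m → ℕ, (∑ i, β i) < k →
      ∑ α ∈ SA.filter (fun α => ∀ i, w ∣ (α i - β i + (β i % w + (w - α₀ i % w)))),
        b α * ((∏ i, (α i).choose (β i) : ℕ) : F) = 0 := by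
    intro β hβ
    set μ : Fin m → ℕ := fun i => β i % w + (w - α₀ i % w) with hμ
    have h0 : (0 : F) = ∑ s : Fin m → Fˣ,
        (∑ α ∈ SA, b α * ((∏ i, (α i).choose (β i) : ℕ) : F)
          * (∏ i, ((s i : F)) ^ (α i - β i))) * (∏ i, ((s i : F)) ^ (μ i)) := by
      rw [Finset.sum_congr rfl fun s _ => by rw [H1 β hβ s, zero_mul]]
      simp
    have h1 : (0 : F) = ∑ α ∈ SA, b α * ((∏ i, (α i).choose (β i) : ℕ) : F)
        * ∏ i, (∑ x : Fˣ, ((x : F)) ^ (α i - β i + μ i)) := by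
      rw [h0]
      calc (∑ s : Fin m → Fˣ,
            (∑ α ∈ SA, b α * ((∏ i, (α i).choose (β i) : ℕ) : F)
              * (∏ i, ((s i : F)) ^ (α i - β i))) * (∏ i, ((s i : F)) ^ (μ i)))
          = ∑ s : Fin m → Fˣ, ∑ α ∈ SA, b α * ((∏ i, (α i).choose (β i) : ℕ) : F)
              * ∏ i, ((s i : F)) ^ (α i - β i + μ i) := by
            refine Finset.sum_congr rfl fun s _ => ?_
            rw [Finset.sum_mul]
            refine Finset.sum_congr rfl fun α _ => ?_
            have hp2 : (∏ i, ((s i : F)) ^ (α i - β i)) * (∏ i, ((s i : F)) ^ (μ i))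
                = ∏ i, ((s i : F)) ^ (α i - β i + μ i) := by
              rw [← Finset.prod_mul_distrib]
              exact Finset.prod_congr rfl fun i _ => (pow_add _ _ _).symm
            rw [mul_assoc (b α * ((∏ i, (α i).choose (β i) : ℕ) : F)), hp2]
        _ = ∑ α ∈ SA, ∑ s : Fin m → Fˣ, b α * ((∏ i, (α i).choose (β i) : ℕ) : F)
              * ∏ i, ((s i : F)) ^ (α i - β i + μ i) := Finset.sum_comm
        _ = ∑ α ∈ SA, b α * ((∏ i, (α i).choose (β i) : ℕ) : F)
              * ∏ i, (∑ x : Fˣ, ((x : F)) ^ (α i - β i + μ i)) := by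
            refine Finset.sum_congr rfl fun α _ => ?_
            rw [← Finset.mul_sum]
            congr 1
            refine Eq.symm ?_
            rw [Finset.prod_univ_sum, Fintype.piFinset_univ]
    have h3 : (0 : F) = ∑ α ∈ SA, (b α * ((∏ i, (α i).choose (β i) : ℕ) : F))
        * (if (∀ i, w ∣ (α i - β i + μ i)) then ((-1 : F)) ^ m else 0) := by
      refine h1.trans ?_
      refine Finset.sum_congr rfl fun α _ => ?_
      congr 1
      rw [Finset.prod_congr rfl fun i _ => hpow (α i - β i + μ i)]
      by_cases hall : ∀ i, w ∣ (α i - β i + μ i)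
      · rw [if_pos hall, Finset.prod_congr rfl fun i _ => if_pos (hall i)]
        simp [Finset.prod_const]
      · rw [if_neg hall]
        push_neg at hall
        obtain ⟨i, hi⟩ := hall
        exact Finset.prod_eq_zero (f := fun i => if w ∣ α i - β i + μ i then (-1 : F) else 0)
          (Finset.mem_univ i) (if_neg hi)
    simp_rw [mul_ite, mul_zero, ← Finset.sum_filter] at h3
    rw [Finset.sum_congr rfl (fun α _ => rfl), ← Finset.sum_mul] at h3
    have hne : ((-1 : F)) ^ m ≠ 0 := pow_ne_zero _ (neg_ne_zero.mpr one_ne_zero)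
    rcases mul_eq_zero.mp h3.symm with h | h
    · exact h
    · exact absurd h hne
  -- Step C : reindex by residue classes and apply aux
  set r : Fin m → ℕ := fun i => α₀ i % w with hrdef
  have hrlt : ∀ i, r i < w := fun i => Nat.mod_lt _ (by omega)
  set Bf : (Fin m → ℕ) → F := fun δ =>
    if (∑ i, (r i + w * δ i)) < k * w then b (fun i => r i + w * δ i) else 0 with hBfdef
  have hmain : ∀ β : Fin m → ℕ, (∑ i, β i) < k →
      ∑ δ ∈ (Fintype.piFinset fun _ : Fin m => Finset.range k).filter (fun δ => ∑ i, δ i < k),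
        (∏ i, ((r i + w * δ i).choose (β i) : F)) * Bf δ = 0 := by
    intro β hβ
    set D := (Fintype.piFinset fun _ : Fin m => Finset.range k).filter
      (fun δ => ∑ i, δ i < k) with hDdef
    set Dgood := D.filter
      (fun δ => (∑ i, (r i + w * δ i)) < k * w ∧ ∀ i, β i ≤ r i + w * δ i) with hDg
    set A' := SA.filter (fun α => ∀ i, w ∣ (α i - β i + (β i % w + (w - α₀ i % w)))) with hA'
    set Agood := A'.filter (fun α => ∀ i, β i ≤ α i) with hAg
    have e1 : ∑ δ ∈ D, (∏ i, ((r i + w * δ i).choose (β i) : F)) * Bf δ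
        = ∑ δ ∈ Dgood, (∏ i, ((r i + w * δ i).choose (β i) : F)) * Bf δ := by
      refine (Finset.sum_subset (Finset.filter_subset _ _) ?_).symm
      intro δ hδ hδn
      have hnot : ¬((∑ i, (r i + w * δ i)) < k * w ∧ ∀ i, β i ≤ r i + w * δ i) := by
        intro hcon
        exact hδn (by simp only [hDg, Finset.mem_filter]; exact ⟨hδ, hcon⟩)
      by_cases hs : (∑ i, (r i + w * δ i)) < k * w
      · have hex : ¬(∀ i, β i ≤ r i + w * δ i) := fun hq => hnot ⟨hs, hq⟩
        push_neg at hex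
        obtain ⟨i, hi⟩ := hex
        have hz : (∏ i, ((r i + w * δ i).choose (β i) : F)) = 0 :=
          Finset.prod_eq_zero (Finset.mem_univ i)
            (by rw [Nat.choose_eq_zero_of_lt hi, Nat.cast_zero])
        rw [hz, zero_mul]
      · rw [show Bf δ = 0 from if_neg hs, mul_zero]
    have e2 : ∑ δ ∈ Dgood, (∏ i, ((r i + w * δ i).choose (β i) : F)) * Bf δ
        = ∑ α ∈ Agood, b α * ((∏ i, (α i).choose (β i) : ℕ) : F) := by
      refine Finset.sum_nbij' (i := fun δ => fun i => r i + w * δ i)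
        (j := fun α => fun i => α i / w) ?_ ?_ ?_ ?_ ?_
      · -- forward membership
        intro δ hδ
        show (fun i => r i + w * δ i) ∈ Agood
        rw [hDg, Finset.mem_filter] at hδ
        obtain ⟨hδD, hs, hble⟩ := hδ
        rw [hDdef, Finset.mem_filter] at hδD
        rw [hAg, Finset.mem_filter, hA', Finset.mem_filter, hSA, Finset.mem_filter]
        refine ⟨⟨⟨?_, hs⟩, ?_⟩, hble⟩
        · rw [Fintype.mem_piFinset]
          intro i
          rw [Finset.mem_range]
          exact lt_of_le_of_lt (Finset.single_le_sum (f := fun j => r j + w * δ j)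
            (fun j _ => Nat.zero_le _) (Finset.mem_univ i)) hs
        · intro i
          refine (modsel hw1 (r i + w * δ i) (β i) (α₀ i) (hble i)).mpr ?_
          rw [Nat.add_mul_mod_self_left, Nat.mod_eq_of_lt (hrlt i), hrdef]
      · -- backward membership
        intro α hα
        show (fun i => α i / w) ∈ Dgood
        rw [hAg, Finset.mem_filter, hA', Finset.mem_filter, hSA, Finset.mem_filter] at hα
        obtain ⟨⟨⟨hpi, hs⟩, hdvd⟩, hble⟩ := hα
        have hmod : ∀ i, α i % w = r i := by
          intro i
          rw [hrdef]
          exact (modsel hw1 (α i) (β i) (α₀ i) (hble i)).mp (hdvd i)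
        have hval : ∀ i, r i + w * (α i / w) = α i := by
          intro i
          rw [← hmod i]
          exact Nat.mod_add_div (α i) w
        have hsum' : (∑ i, (r i + w * (α i / w))) = ∑ i, α i :=
          Finset.sum_congr rfl fun i _ => hval i
        have hsd : (∑ i, α i / w) < k := by
          have h1 : w * (∑ i, α i / w) ≤ ∑ i, α i := by
            rw [Finset.mul_sum]
            refine Finset.sum_le_sum fun i _ => ?_
            have := hval i; omega
          have h2 : w * (∑ i, α i / w) < w * k := by
            calc w * (∑ i, α i / w) ≤ ∑ i, α i := h1
              _ < k * w := hs
              _ = w * k := Nat.mul_comm _ _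
          exact Nat.lt_of_mul_lt_mul_left h2
        rw [hDg, Finset.mem_filter, hDdef, Finset.mem_filter]
        refine ⟨⟨?_, hsd⟩, ?_, ?_⟩
        · rw [Fintype.mem_piFinset]
          intro i
          rw [Finset.mem_range]
          exact lt_of_le_of_lt (Finset.single_le_sum (f := fun j => α j / w)
            (fun j _ => Nat.zero_le _) (Finset.mem_univ i)) hsd
        · rw [hsum']; exact hs
        · intro i; rw [hval i]; exact hble i
      · -- left inverse
        intro δ hδ
        show (fun i => (r i + w * δ i) / w) = δ
        funext i
        show (r i + w * δ i) / w = δ i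
        rw [Nat.add_mul_div_left _ _ (by omega : 0 < w), Nat.div_eq_of_lt (hrlt i), Nat.zero_add]
      · -- right inverse
        intro α hα
        rw [hAg, Finset.mem_filter, hA', Finset.mem_filter] at hα
        obtain ⟨⟨hSA', hdvd⟩, hble⟩ := hα
        show (fun i => r i + w * (α i / w)) = α
        funext i
        show r i + w * (α i / w) = α i
        have hmod : α i % w = r i :=
          (modsel hw1 (α i) (β i) (α₀ i) (hble i)).mp (hdvd i)
        rw [← hmod]
        exact Nat.mod_add_div (α i) w
      · -- values agree
        intro δ hδ
        rw [hDg, Finset.mem_filter] at hδ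
        obtain ⟨hδD, hs, hble⟩ := hδ
        show (∏ i, ((r i + w * δ i).choose (β i) : F)) * Bf δ
            = b (fun i => r i + w * δ i) * ((∏ i, (r i + w * δ i).choose (β i) : ℕ) : F)
        rw [show Bf δ = b (fun i => r i + w * δ i) from if_pos hs, Nat.cast_prod, mul_comm]
    have e3 : ∑ α ∈ Agood, b α * ((∏ i, (α i).choose (β i) : ℕ) : F)
        = ∑ α ∈ A', b α * ((∏ i, (α i).choose (β i) : ℕ) : F) := by
      refine Finset.sum_subset (Finset.filter_subset _ _) ?_
      intro α hα hαn
      have hex : ¬(∀ i, β i ≤ α i) := by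
        intro hcon
        exact hαn (by simp only [hAg, Finset.mem_filter]; exact ⟨hα, hcon⟩)
      push_neg at hex
      obtain ⟨i, hi⟩ := hex
      have hz : (∏ i, (α i).choose (β i)) = 0 :=
        Finset.prod_eq_zero (Finset.mem_univ i) (Nat.choose_eq_zero_of_lt hi)
      rw [hz, Nat.cast_zero, mul_zero]
    exact e1.trans (e2.trans (e3.trans (orth β hβ)))
  have hzero := aux hwF r Bf hmain
  set δ₀ : Fin m → ℕ := fun i => α₀ i / w with hδ₀def
  have hval : ∀ i, r i + w * δ₀ i = α₀ i := fun i => Nat.mod_add_div (α₀ i) w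
  have hsd : (∑ i, δ₀ i) < k := by
    have h1 : w * (∑ i, δ₀ i) ≤ ∑ i, α₀ i := by
      rw [Finset.mul_sum]
      refine Finset.sum_le_sum fun i _ => ?_
      have := hval i; omega
    have h2 : w * (∑ i, δ₀ i) < w * k := by
      calc w * (∑ i, δ₀ i) ≤ ∑ i, α₀ i := h1
        _ < k * w := hα₀
        _ = w * k := Nat.mul_comm _ _
    exact Nat.lt_of_mul_lt_mul_left h2
  have hδ₀mem : δ₀ ∈ (Fintype.piFinset fun _ : Fin m => Finset.range k).filter
      (fun δ => ∑ i, δ i < k) := by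
    rw [Finset.mem_filter]
    refine ⟨?_, hsd⟩
    rw [Fintype.mem_piFinset]
    intro i
    rw [Finset.mem_range]
    exact lt_of_le_of_lt (Finset.single_le_sum (f := δ₀)
      (fun j _ => Nat.zero_le _) (Finset.mem_univ i)) hsd
  have hfin := hzero δ₀ hδ₀mem
  rw [show Bf δ₀ = if (∑ i, (r i + w * δ₀ i)) < k * w
      then b (fun i => r i + w * δ₀ i) else 0 from rfl] at hfin
  rw [show (fun i => r i + w * δ₀ i) = α₀ from funext hval] at hfin
  rw [if_pos hα₀] at hfin
  exact hfin
end

section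
/- Let q be a prime power, let P ∈ 𝔽_q[x_1, …, x_m], let Q = (Q_1, …, Q_m) be an m-tuple of polynomials in 𝔽_q[y_1, …, y_j], and let a ∈ 𝔽_q^j. Then mult(P ∘ Q, a) ≥ mult(P, Q(a)), where P ∘ Q denotes the polynomial in 𝔽_q[y_1, …, y_j] obtained by substituting Q_i(y) for x_i in P. -/
/-!
Translating by `a` turns the Hasse derivatives of `f` at `a` into the coefficients of `f(a + y)`,
so `mult(f, a) ≥ M` says that `f(a + y)` lies in `𝔪^M`, where `𝔪 = (y_1, …, y_j)`.
Writing `Q(a + y) = Q(a) + g(y)` with every `g_i ∈ 𝔪`, the translate of `P ∘ Q` is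
`P(Q(a) + x)` evaluated at `x = g(y)`, and substituting elements of `𝔪` maps `𝔪^M` into `𝔪^M`.
-/

namespace MvPolynomial

section CommSemiring

variable {σ τ R : Type*} [CommSemiring R]

noncomputable def shift (a : σ → R) : MvPolynomial σ R →ₐ[R] MvPolynomial σ R :=
  aeval fun i => C (a i) + X i

theorem constantCoeff_shift (a : σ → R) (f : MvPolynomial σ R) :
    constantCoeff (shift a f) = eval a f := by
  rw [shift, map_aeval]
  congr 1
  ext <;> simp

theorem aeval_mem_pow_idealOfVars_s11 {g : σ → MvPolynomial τ R} (hg : ∀ i, g i ∈ idealOfVars τ R)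
    {p : MvPolynomial σ R} {n : ℕ} (hp : p ∈ idealOfVars σ R ^ n) :
    aeval g p ∈ idealOfVars τ R ^ n := by
  have hmap : (idealOfVars σ R).map (aeval g) ≤ idealOfVars τ R := by
    rw [Ideal.map_span, Ideal.span_le, ← Set.range_comp, Set.range_subset_iff]
    simpa using hg
  have hp' := Ideal.mem_map_of_mem (aeval g : MvPolynomial σ R →ₐ[R] MvPolynomial τ R) hp
  rw [Ideal.map_pow] at hp'
  exact Ideal.pow_right_mono hmap n hp'

end CommSemiring

section CommRing

variable {σ τ R : Type*} [CommRing R]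

theorem sub_C_constantCoeff_mem_idealOfVars (p : MvPolynomial σ R) :
    p - C (constantCoeff p) ∈ idealOfVars σ R := by
  rw [← pow_one (idealOfVars σ R), mem_pow_idealOfVars_iff']
  intro x hx
  rw [Nat.lt_one_iff, Finsupp.degree_eq_zero_iff] at hx
  simp [hx, constantCoeff_eq]

theorem eval_hasseDeriv {m : ℕ} (a : Fin m → R) (β : Fin m →₀ ℕ) (f : MvPolynomial (Fin m) R) :
    eval a (hasseDeriv β f) = coeff β (shift a f) := by
  rw [hasseDeriv, ← coeff_map, shift, eval₂_comp_left (map (eval a)), aeval_def]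
  congr 2
  · ext; simp
  · funext i; simp

theorem forall_eval_hasseDeriv_eq_zero_iff {m : ℕ} (a : Fin m → R) (f : MvPolynomial (Fin m) R)
    (M : ℕ) :
    (∀ β : Fin m →₀ ℕ, ∑ i, β i < M → eval a (hasseDeriv β f) = 0) ↔
      shift a f ∈ idealOfVars (Fin m) R ^ M := by
  simp only [mem_pow_idealOfVars_iff', Finsupp.degree_eq_sum, eval_hasseDeriv]

theorem shift_aeval (Q : σ → MvPolynomial τ R) (a : τ → R) (P : MvPolynomial σ R) :
    shift a (aeval Q P) =
      aeval (fun i => shift a (Q i) - C (eval a (Q i))) (shift (fun i => eval a (Q i)) P) := by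
  simp only [shift, comp_aeval_apply]
  congr 2 with i
  simp

end CommRing

end MvPolynomial

open MvPolynomial

theorem polyMult_comp_ge_general {F : Type*} [Field F] (m j : ℕ)
    (P : MvPolynomial (Fin m) F) (Q : Fin m → MvPolynomial (Fin j) F) (a : Fin j → F) :
    polyMult P (fun i => MvPolynomial.eval a (Q i)) ≤
      polyMult (MvPolynomial.aeval Q P) a := by
  refine biSup_mono fun M hM => ?_
  rw [Set.mem_ofPred_eq, forall_eval_hasseDeriv_eq_zero_iff] at hM ⊢
  have hg (i : Fin m) : shift a (Q i) - C (eval a (Q i)) ∈ idealOfVars (Fin j) F := by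
    simpa only [constantCoeff_shift] using sub_C_constantCoeff_mem_idealOfVars (shift a (Q i))
  rw [shift_aeval]
  exact aeval_mem_pow_idealOfVars_s11 hg hM

/-- `mult(P ∘ Q, a) ≥ mult(P, Q(a))`, where `P ∘ Q` is obtained by substituting
`Q_i(y)` for `x_i` in `P`. -/
theorem polyMult_comp_ge {F : Type*} [Field F] [Fintype F]
    (q m j : ℕ) (hq : IsPrimePow q) (hcard : Fintype.card F = q)
    (P : MvPolynomial (Fin m) F) (Q : Fin m → MvPolynomial (Fin j) F) (a : Fin j → F) :
    polyMult P (fun i => MvPolynomial.eval a (Q i)) ≤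
      polyMult (MvPolynomial.aeval Q P) a :=
  polyMult_comp_ge_general m j P Q a
end

section
/- Let q be a prime power, let A ⊆ 𝔽_q^n, and let M, D ∈ ℕ. If C(M + n − 1, n) · |A| < C(D + n, n), then there exists a nonzero polynomial P ∈ 𝔽_q[x_1, …, x_n] of degree at most D that vanishes on A with multiplicity M. -/
open MvPolynomial Module

namespace Finsupp

instance finite_subtype_degree_lt {σ : Type*} [Finite σ] (M : ℕ) :
    Finite {s : σ →₀ ℕ // s.degree < M} :=
  (finite_of_degree_lt M).to_subtype

variable (σ : Type*) [Fintype σ]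

theorem card_degree_le (d : ℕ) :
    Nat.card {s : σ →₀ ℕ // s.degree ≤ d} = (d + Fintype.card σ).choose (Fintype.card σ) := by
  classical
  set t : Finset (σ →₀ ℕ) :=
    (Finset.range (d + 1)).biUnion fun k => Finset.univ.finsuppAntidiag k
  have hmem : ∀ s : σ →₀ ℕ, s.degree ≤ d ↔ s ∈ t := fun s => by
    simp [t, degree_eq_sum]
  have hdisj : (Finset.range (d + 1) : Set ℕ).PairwiseDisjoint
      fun k => Finset.univ.finsuppAntidiag (ι := σ) k := by
    intro i _ j _ hij
    exact Finset.disjoint_left.2 fun s hi hj => hij <| by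
      rw [Finset.mem_finsuppAntidiag] at hi hj; omega
  rw [Nat.card_congr (Equiv.subtypeEquivRight hmem), Nat.card_eq_fintype_card, Fintype.card_coe,
    Finset.card_biUnion hdisj]
  simp_rw [Finset.card_finsuppAntidiag_nat_eq_multichoose, Finset.card_univ]
  exact Nat.sum_range_multichoose d _

theorem card_degree_lt_le (M : ℕ) :
    Nat.card {s : σ →₀ ℕ // s.degree < M} ≤ (M + Fintype.card σ - 1).choose (Fintype.card σ) := by
  cases M with
  | zero => simp
  | succ k =>
    simp_rw [Nat.lt_succ_iff, card_degree_le]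
    rw [Nat.add_right_comm, Nat.add_sub_cancel]

end Finsupp

theorem finrank_restrictTotalDegree (σ : Type*) [Fintype σ] (K : Type*) [Field K] (D : ℕ) :
    finrank K (restrictTotalDegree σ K D) = (D + Fintype.card σ).choose (Fintype.card σ) := by
  have hsupp : {s : σ →₀ ℕ | (s.sum fun _ e => e) ≤ D} = {s | s.degree ≤ D} := by
    ext s
    simp [Finsupp.degree_apply, Finsupp.sum]
  rw [restrictTotalDegree, hsupp, finrank_eq_nat_card_basis (basisRestrictSupport K _)]
  exact Finsupp.card_degree_le σ D

section

variable {m : ℕ} {R : Type*} [CommRing R]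

noncomputable def hasseDerivLinearMap (β : Fin m →₀ ℕ) :
    MvPolynomial (Fin m) R →ₗ[R] MvPolynomial (Fin m) R where
  toFun := hasseDeriv β
  map_add' f g := by simp [hasseDeriv]
  map_smul' c f := by simp [hasseDeriv, smul_eq_C_mul]

@[simp]
theorem hasseDerivLinearMap_apply (β : Fin m →₀ ℕ) (f : MvPolynomial (Fin m) R) :
    hasseDerivLinearMap β f = hasseDeriv β f := rfl

noncomputable def evalHasseDerivs (A : Set (Fin m → R)) (M : ℕ) :
    MvPolynomial (Fin m) R →ₗ[R] (A × {β : Fin m →₀ ℕ // β.degree < M} → R) :=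
  LinearMap.pi fun p => (aeval p.1.1).toLinearMap ∘ₗ hasseDerivLinearMap p.2.1

theorem mem_ker_evalHasseDerivs {A : Set (Fin m → R)} {M : ℕ} {f : MvPolynomial (Fin m) R} :
    f ∈ LinearMap.ker (evalHasseDerivs A M) ↔
      ∀ a ∈ A, ∀ β : Fin m →₀ ℕ, β.degree < M → eval a (hasseDeriv β f) = 0 := by
  simp [evalHasseDerivs, _root_.funext_iff]

theorem le_polyMult_of_eval_hasseDeriv_eq_zero {f : MvPolynomial (Fin m) R} {a : Fin m → R}
    {M : ℕ} (h : ∀ β : Fin m →₀ ℕ, β.degree < M → eval a (hasseDeriv β f) = 0) :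
    (M : ℕ∞) ≤ polyMult f a :=
  le_biSup (fun M' : ℕ => (M' : ℕ∞)) fun β hβ => h β (by rwa [Finsupp.degree_eq_sum])

end

theorem finrank_codomain_evalHasseDerivs_le {K σ : Type*} [Field K] [Fintype σ]
    {A : Set (σ → K)} (hA : A.Finite) (M : ℕ) :
    finrank K (A × {β : σ →₀ ℕ // β.degree < M} → K) ≤
      (M + Fintype.card σ - 1).choose (Fintype.card σ) * A.ncard := by
  have := hA.to_subtype
  let _ := Fintype.ofFinite A
  let _ := Fintype.ofFinite {β : σ →₀ ℕ // β.degree < M}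
  rw [finrank_fintype_fun_eq_card, Fintype.card_prod, ← Nat.card_eq_fintype_card,
    ← Nat.card_eq_fintype_card, Nat.card_coe_set_eq, mul_comm]
  exact Nat.mul_le_mul_right A.ncard (Finsupp.card_degree_lt_le σ M)

theorem exists_poly_vanishing_with_multiplicity_general {F : Type*} [Field F] [Fintype F]
    (n M D : ℕ)
    (A : Set (Fin n → F))
    (hA : Nat.choose (M + n - 1) n * A.ncard < Nat.choose (D + n) n) :
    ∃ P : MvPolynomial (Fin n) F, P ≠ 0 ∧ P.totalDegree ≤ D ∧
      ∀ a ∈ A, (M : ℕ∞) ≤ polyMult P a := by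
  have hdim : finrank F (A × {β : Fin n →₀ ℕ // β.degree < M} → F)
      < finrank F (restrictTotalDegree (Fin n) F D) := by
    have hcodomain := finrank_codomain_evalHasseDerivs_le A.toFinite M
    rw [Fintype.card_fin] at hcodomain
    rw [finrank_restrictTotalDegree, Fintype.card_fin]
    exact hcodomain.trans_lt hA
  obtain ⟨⟨P, hdeg⟩, hker, hP⟩ := (Submodule.ne_bot_iff _).1 <|
    LinearMap.ker_ne_bot_of_finrank_lt (f := (evalHasseDerivs A M).domRestrict _) hdim
  have hvanish := mem_ker_evalHasseDerivs.1 (LinearMap.mem_ker.2 (LinearMap.mem_ker.1 hker))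
  exact ⟨P, fun h => hP (Subtype.ext h), (mem_restrictTotalDegree _ _ _).1 hdeg,
    fun a ha => le_polyMult_of_eval_hasseDeriv_eq_zero (hvanish a ha)⟩

/-- If `C(M + n - 1, n) · |A| < C(D + n, n)`, there is a nonzero polynomial of degree
at most `D` vanishing on `A` with multiplicity `M`. -/
theorem exists_poly_vanishing_with_multiplicity {F : Type*} [Field F] [Fintype F]
    (q n M D : ℕ) (hq : IsPrimePow q) (hcard : Fintype.card F = q)
    (A : Set (Fin n → F))
    (hA : Nat.choose (M + n - 1) n * A.ncard < Nat.choose (D + n) n) :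
    ∃ P : MvPolynomial (Fin n) F, P ≠ 0 ∧ P.totalDegree ≤ D ∧
      ∀ a ∈ A, (M : ℕ∞) ≤ polyMult P a :=
  exists_poly_vanishing_with_multiplicity_general n M D A hA
end
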